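/- Let G = (V, A, g) be a finite directed graph with gain function g and battery capacity B > 0, and let x, y, z ∈ V. Suppose there is a walk P from x to y whose induced path is monotone with respect to a charge drop schedule C_1 with g^{C_1}(P) ≥ 0, and a walk Q from y to z whose induced path is monotone with respect to a charge drop schedule C_2 with g^{C_1}(P) + g^{C_2}(Q) ≥ 0. Then there exists a walk W from x to z with α_0(W) ≥ 0: starting at x with an empty battery, the car can reach z. -/

import Mathlib

open Finset

namespace EV

noncomputable section

/-- Charge after traversing `i` arcs of a path with arc gains `g`, battery capacity `B`,
initial charge `b`. -/
def charge (B b : ℝ) (g : ℕ → ℝ) : ℕ → ℝ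
  | 0 => b
  | i + 1 => min (charge B b g i + g i) B

/-- The traversal of the path with `n` arcs is feasible from initial charge `b`. -/
def Feasible (B b : ℝ) (g : ℕ → ℝ) (n : ℕ) : Prop :=
  ∀ i < n, 0 ≤ charge B b g i + g i

open Classical in
/-- Maximum final charge `α_b(P)` for a path `P` with `n` arc gains `g`,
as an extended real (`⊥ = -∞` if the traversal is infeasible). -/
def alpha (B b : ℝ) (g : ℕ → ℝ) (n : ℕ) : EReal :=
  if Feasible B b g n then ((charge B b g n : ℝ) : EReal) else ⊥

/-- Gain of the `i`-th vertex (0-indexed): the sum of the first `i` arc gains. -/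
def vGain (g : ℕ → ℝ) (i : ℕ) : ℝ := ∑ t ∈ Finset.range i, g t

/-- `P` is traversable: `α_B(P) ≥ 0`, i.e. feasible from a full battery. -/
def Traversable (B : ℝ) (g : ℕ → ℝ) (n : ℕ) : Prop := Feasible B B g n

/-- `C` is a charge drop schedule for a path with `n` arcs (vertices `0,…,n`):
no drop at the first vertex, all drops nonnegative. -/
def Schedule (C : ℕ → ℝ) (n : ℕ) : Prop := C 0 = 0 ∧ ∀ i ≤ n, 0 ≤ C i

/-- Gain of vertex `i` with respect to the charge drop schedule `C`. -/
def cGain (g C : ℕ → ℝ) (i : ℕ) : ℝ := vGain g i - ∑ t ∈ Finset.range (i + 1), C t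

/-- `P` (with `n` arcs) is ascending with respect to the schedule `C`. -/
def AscendingC (B : ℝ) (g C : ℕ → ℝ) (n : ℕ) : Prop :=
  Traversable B g n ∧ ∀ i ≤ n, 0 ≤ cGain g C i ∧ cGain g C i ≤ cGain g C n

/-- `P` (with `n` arcs) is descending with respect to the schedule `C`. -/
def DescendingC (B : ℝ) (g C : ℕ → ℝ) (n : ℕ) : Prop :=
  Traversable B g n ∧ ∀ i ≤ n, cGain g C n ≤ cGain g C i ∧ cGain g C i ≤ 0

/-- `P` is monotone with respect to the schedule `C`. -/
def MonotoneC (B : ℝ) (g C : ℕ → ℝ) (n : ℕ) : Prop :=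
  AscendingC B g C n ∨ DescendingC B g C n

/-- Ascending with respect to the zero schedule. -/
def Ascending (B : ℝ) (g : ℕ → ℝ) (n : ℕ) : Prop := AscendingC B g (fun _ => 0) n

/-- Descending with respect to the zero schedule. -/
def Descending (B : ℝ) (g : ℕ → ℝ) (n : ℕ) : Prop := DescendingC B g (fun _ => 0) n

/-- Monotone with respect to the zero schedule. -/
def MonotonePath (B : ℝ) (g : ℕ → ℝ) (n : ℕ) : Prop := Ascending B g n ∨ Descending B g n

/-- The contiguous subpath whose arcs start at arc index `a`. -/
def SubPath (g : ℕ → ℝ) (a : ℕ) : ℕ → ℝ := fun t => g (a + t)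

/-- Restriction of a charge drop schedule to the subpath starting at vertex `a`:
no drop at the subpath's first vertex. -/
def restrict (C : ℕ → ℝ) (a : ℕ) : ℕ → ℝ := fun t => if t = 0 then 0 else C (a + t)

/-- First-arc-bounded with respect to a schedule `C` (no drop at the second vertex,
and all vertex gains lie between the gains of the first two vertices). -/
def FirstArcBoundedC (g C : ℕ → ℝ) (n : ℕ) : Prop :=
  C 1 = 0 ∧
    ((0 ≤ g 0 ∧ ∀ i ≤ n, 0 ≤ cGain g C i ∧ cGain g C i ≤ g 0) ∨
     (g 0 ≤ 0 ∧ ∀ i ≤ n, g 0 ≤ cGain g C i ∧ cGain g C i ≤ 0))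

/-- Last-arc-bounded with respect to a schedule `C` (no drops at the last two vertices,
and all vertex gains lie between the gains of the last two vertices). -/
def LastArcBoundedC (g C : ℕ → ℝ) (n : ℕ) : Prop :=
  C (n - 1) = 0 ∧ C n = 0 ∧
    ((0 ≤ g (n - 1) ∧ ∀ i ≤ n, cGain g C (n - 1) ≤ cGain g C i ∧ cGain g C i ≤ cGain g C n) ∨
     (g (n - 1) < 0 ∧ ∀ i ≤ n, cGain g C n ≤ cGain g C i ∧ cGain g C i ≤ cGain g C (n - 1)))

/-- First-arc-bounded (zero schedule). -/
def FirstArcBounded (g : ℕ → ℝ) (n : ℕ) : Prop := FirstArcBoundedC g (fun _ => 0) n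

/-- Last-arc-bounded (zero schedule). -/
def LastArcBounded (g : ℕ → ℝ) (n : ℕ) : Prop := LastArcBoundedC g (fun _ => 0) n

/-- Arc-bounded: first- or last-arc-bounded. -/
def ArcBounded (g : ℕ → ℝ) (n : ℕ) : Prop := FirstArcBounded g n ∨ LastArcBounded g n

/-- A funnel: arc-bounded and containing no monotone subpath of 2 or 3 consecutive arcs. -/
def Funnel (B : ℝ) (g : ℕ → ℝ) (n : ℕ) : Prop :=
  ArcBounded g n ∧ ∀ a m, (m = 2 ∨ m = 3) → a + m ≤ n → ¬ MonotonePath B (SubPath g a) m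

/-- `j = s̄(i)`: the maximal index `j ≥ i` (among arcs of a path with `n` arcs) such that
the subpath of arcs `i,…,j` is first-arc-bounded. -/
def IsSbar (g : ℕ → ℝ) (n i j : ℕ) : Prop :=
  i ≤ j ∧ j < n ∧ FirstArcBounded (SubPath g i) (j - i + 1) ∧
    ∀ j', i ≤ j' → j' < n → FirstArcBounded (SubPath g i) (j' - i + 1) → j' ≤ j

/-- `j = s̲(i)`: the minimal index `j ≤ i` such that the subpath of arcs `j,…,i`
is last-arc-bounded. -/
def IsSlow (g : ℕ → ℝ) (n i j : ℕ) : Prop :=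
  j ≤ i ∧ i < n ∧ LastArcBounded (SubPath g j) (i - j + 1) ∧
    ∀ j', j' ≤ i → LastArcBounded (SubPath g j') (i - j' + 1) → j ≤ j'

/-- Arc gains of the walk around a cycle with `m` arc gains `g`, starting at vertex `a`. -/
def cyc (g : ℕ → ℝ) (m a : ℕ) : ℕ → ℝ := fun t => g ((a + t) % m)

/-- A walk of length `ℓ` from `x` to `y` in the directed graph with arc relation `A`. -/
def IsWalk {V : Type*} (A : V → V → Prop) (w : ℕ → V) (ℓ : ℕ) (x y : V) : Prop :=
  w 0 = x ∧ w ℓ = y ∧ ∀ t < ℓ, A (w t) (w (t + 1))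

/-- The sequence of arc gains induced by a walk `w` in a graph with gain function `g`. -/
def walkGains {V : Type*} (g : V → V → ℝ) (w : ℕ → V) : ℕ → ℝ :=
  fun t => g (w t) (w (t + 1))

/- ===== auxiliary lemmas ===== -/

lemma vGain_succ (g : ℕ → ℝ) (k : ℕ) : vGain g (k + 1) = vGain g k + g k :=
  Finset.sum_range_succ g k

lemma vGain_zero (g : ℕ → ℝ) : vGain g 0 = 0 := by simp [vGain]

/-- Running maximum of vertex gains. -/
def maxV (g : ℕ → ℝ) : ℕ → ℝ
  | 0 => 0
  | k + 1 => max (maxV g k) (vGain g (k + 1))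

lemma maxV_succ (g : ℕ → ℝ) (k : ℕ) :
    maxV g (k + 1) = max (maxV g k) (vGain g (k + 1)) := rfl

lemma maxV_ge (g : ℕ → ℝ) {j k : ℕ} (hjk : j ≤ k) : vGain g j ≤ maxV g k := by
  induction k with
  | zero =>
    have : j = 0 := by omega
    subst this; simp [maxV, vGain]
  | succ k ih =>
    rw [maxV_succ]
    rcases Nat.lt_or_ge j (k + 1) with hc | hc
    · exact le_trans (ih (by omega)) (le_max_left _ _)
    · have : j = k + 1 := by omega
      subst this; exact le_max_right _ _

lemma maxV_le (g : ℕ → ℝ) {k : ℕ} {c : ℝ} (hle : ∀ j ≤ k, vGain g j ≤ c) :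
    maxV g k ≤ c := by
  induction k with
  | zero => simpa [maxV, vGain] using hle 0 le_rfl
  | succ k ih =>
    rw [maxV_succ, max_le_iff]
    exact ⟨ih (fun j hj => hle j (by omega)), hle (k + 1) le_rfl⟩

/-- Closed form for the charge function. -/
lemma charge_closed (B b : ℝ) (hbB : b ≤ B) (g : ℕ → ℝ) (k : ℕ) :
    charge B b g k = min (b + vGain g k) (B + vGain g k - maxV g k) := by
  induction k with
  | zero => simp [charge, vGain, maxV, min_eq_left hbB]
  | succ k ih =>
    show min (charge B b g k + g k) B = _
    rw [ih, maxV_succ, vGain_succ]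
    simp only [min_def, max_def]
    split_ifs <;> linarith

lemma traversable_bound (B : ℝ) (hB : 0 < B) (g : ℕ → ℝ) (n : ℕ)
    (hT : Traversable B g n) :
    ∀ j k, j ≤ k → k ≤ n → -B ≤ vGain g k - vGain g j := by
  intro j k hjk hkn
  rcases eq_or_lt_of_le hjk with rfl | hlt
  · linarith
  · have hi : k - 1 < n := by omega
    have h0 := hT (k - 1) hi
    rw [charge_closed B B le_rfl] at h0
    have hM : vGain g j ≤ maxV g (k - 1) := maxV_ge g (by omega)
    have hmin : min (B + vGain g (k - 1)) (B + vGain g (k - 1) - maxV g (k - 1)) ≤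
        B + vGain g (k - 1) - maxV g (k - 1) := min_le_right _ _
    have hv : vGain g (k - 1 + 1) = vGain g (k - 1) + g (k - 1) := vGain_succ g (k - 1)
    have hk1 : k - 1 + 1 = k := by omega
    rw [hk1] at hv
    linarith

lemma feasible_of_bounds (B : ℝ) (hB : 0 < B) (g : ℕ → ℝ) (n : ℕ)
    (h1 : ∀ k ≤ n, 0 ≤ vGain g k)
    (h2 : ∀ j k, j ≤ k → k ≤ n → -B ≤ vGain g k - vGain g j) :
    Feasible B 0 g n ∧ 0 ≤ charge B 0 g n := by
  constructor
  · intro i hi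
    rw [charge_closed B 0 hB.le]
    have hv := vGain_succ g i
    have hA := h1 (i + 1) (by omega)
    have hMle : maxV g i ≤ B + vGain g (i + 1) :=
      maxV_le g (fun j hj => by have := h2 j (i + 1) (by omega) (by omega); linarith)
    have hb : -g i ≤ min (0 + vGain g i) (B + vGain g i - maxV g i) :=
      le_min (by linarith) (by linarith)
    linarith
  · rw [charge_closed B 0 hB.le]
    have hMle : maxV g n ≤ B + vGain g n :=
      maxV_le g (fun j hj => by have := h2 j n hj le_rfl; linarith)
    exact le_min (by have := h1 n le_rfl; linarith) (by linarith)

lemma cGain_le_vGain (g C : ℕ → ℝ) {n i : ℕ} (hC : Schedule C n) (hi : i ≤ n) :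
    cGain g C i ≤ vGain g i := by
  have hnn : 0 ≤ ∑ t ∈ Finset.range (i + 1), C t :=
    Finset.sum_nonneg fun t ht => hC.2 t (by simp at ht; omega)
  simp only [cGain]
  linarith

lemma cGain_diff_le (g C : ℕ → ℝ) {n i j : ℕ} (hC : Schedule C n) (hij : i ≤ j)
    (hj : j ≤ n) :
    cGain g C j - cGain g C i ≤ vGain g j - vGain g i := by
  have hsub : Finset.range (i + 1) ⊆ Finset.range (j + 1) := by
    intro x hx; simp only [Finset.mem_range] at hx ⊢; omega
  have hmono : ∑ t ∈ Finset.range (i + 1), C t ≤ ∑ t ∈ Finset.range (j + 1), C t :=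
    Finset.sum_le_sum_of_subset_of_nonneg hsub
      (fun t ht _ => hC.2 t (by simp at ht; omega))
  simp only [cGain]
  linarith

/-- In a finite directed graph, if there is a walk `P` from `x` to `y` whose
induced path is monotone with respect to a schedule `C₁` with `g^{C₁}(P) ≥ 0`, and a walk
`Q` from `y` to `z` whose induced path is monotone with respect to a schedule `C₂` with
`g^{C₁}(P) + g^{C₂}(Q) ≥ 0`, then there is a walk `W` from `x` to `z` with `α_0(W) ≥ 0`. -/
theorem reach_from_empty {V : Type*} [Fintype V] (A : V → V → Prop) (g : V → V → ℝ)
    (B : ℝ) (hB : 0 < B) (x y z : V)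
    (wP : ℕ → V) (ℓP : ℕ) (hWP : IsWalk A wP ℓP x y)
    (C₁ : ℕ → ℝ) (hC₁ : Schedule C₁ ℓP)
    (hPmono : MonotoneC B (walkGains g wP) C₁ ℓP)
    (hgP : 0 ≤ cGain (walkGains g wP) C₁ ℓP)
    (wQ : ℕ → V) (ℓQ : ℕ) (hWQ : IsWalk A wQ ℓQ y z)
    (C₂ : ℕ → ℝ) (hC₂ : Schedule C₂ ℓQ)
    (hQmono : MonotoneC B (walkGains g wQ) C₂ ℓQ)
    (hsum : 0 ≤ cGain (walkGains g wP) C₁ ℓP + cGain (walkGains g wQ) C₂ ℓQ) :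
    ∃ w ℓ, IsWalk A w ℓ x z ∧ (0 : EReal) ≤ alpha B 0 (walkGains g w) ℓ := by
  classical
  set gP : ℕ → ℝ := walkGains g wP with hgPdef
  set gQ : ℕ → ℝ := walkGains g wQ with hgQdef
  set p : ℝ := cGain gP C₁ ℓP with hpdef
  set q : ℝ := cGain gQ C₂ ℓQ with hqdef
  -- traversability
  have hPtrav : Traversable B gP ℓP := hPmono.elim And.left And.left
  have hQtrav : Traversable B gQ ℓQ := hQmono.elim And.left And.left
  -- facts about P
  have hP0 : ∀ i ≤ ℓP, 0 ≤ vGain gP i := by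
    intro i hi
    have hcv := cGain_le_vGain gP C₁ hC₁ hi
    rcases hPmono with ⟨_, hA⟩ | ⟨_, hD⟩
    · have := (hA i hi).1; linarith
    · have := (hD i hi).1; linarith
  have hPtop : ∀ i ≤ ℓP, vGain gP i ≤ vGain gP ℓP := by
    intro i hi
    have hdiff := cGain_diff_le gP C₁ hC₁ hi le_rfl
    rcases hPmono with ⟨_, hA⟩ | ⟨_, hD⟩
    · have := (hA i hi).2; linarith
    · have := (hD i hi).2; linarith
  have hPp : p ≤ vGain gP ℓP := cGain_le_vGain gP C₁ hC₁ le_rfl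
  -- facts about Q
  have hQq : ∀ i ≤ ℓQ, min 0 q ≤ vGain gQ i := by
    intro i hi
    have hcv := cGain_le_vGain gQ C₂ hC₂ hi
    rcases hQmono with ⟨_, hA⟩ | ⟨_, hD⟩
    · have := (hA i hi).1
      have : min 0 q ≤ (0 : ℝ) := min_le_left _ _
      linarith [(hA i hi).1]
    · have := (hD i hi).1
      have : min 0 q ≤ q := min_le_right _ _
      linarith [(hD i hi).1]
  -- the concatenated walk
  set w : ℕ → V := fun t => if t ≤ ℓP then wP t else wQ (t - ℓP) with hwdef
  set h : ℕ → ℝ := walkGains g w with hhdef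
  have hwP : ∀ t ≤ ℓP, w t = wP t := by
    intro t ht; simp only [hwdef, if_pos ht]
  have hwQ : ∀ t, ℓP ≤ t → w t = wQ (t - ℓP) := by
    intro t ht
    rcases eq_or_lt_of_le ht with rfl | hlt
    · simp only [hwdef, if_pos le_rfl, Nat.sub_self]
      rw [hWP.2.1, ← hWQ.1]
    · simp only [hwdef, if_neg (by omega : ¬ t ≤ ℓP)]
  have hgain1 : ∀ t < ℓP, h t = gP t := by
    intro t ht
    simp only [hhdef, hgPdef, walkGains]
    rw [hwP t (by omega), hwP (t + 1) (by omega)]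
  have hgain2 : ∀ t, ℓP ≤ t → h t = gQ (t - ℓP) := by
    intro t ht
    simp only [hhdef, hgQdef, walkGains]
    rw [hwQ t ht, hwQ (t + 1) (by omega)]
    have : t + 1 - ℓP = t - ℓP + 1 := by omega
    rw [this]
  have hv1 : ∀ k ≤ ℓP, vGain h k = vGain gP k := by
    intro k hk
    exact Finset.sum_congr rfl fun t ht => hgain1 t (by simp at ht; omega)
  have hv2 : ∀ m, vGain h (ℓP + m) = vGain gP ℓP + vGain gQ m := by
    intro m
    induction m with
    | zero => simp [vGain_zero, hv1 ℓP le_rfl]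
    | succ m ih =>
      have : ℓP + (m + 1) = (ℓP + m) + 1 := by omega
      rw [this, vGain_succ, ih, vGain_succ, hgain2 (ℓP + m) (by omega)]
      have : ℓP + m - ℓP = m := by omega
      rw [this]; ring
  -- the two key bounds for the concatenation
  have H1 : ∀ k ≤ ℓP + ℓQ, 0 ≤ vGain h k := by
    intro k hk
    rcases le_or_gt k ℓP with hc | hc
    · rw [hv1 k hc]; exact hP0 k hc
    · obtain ⟨m, rfl⟩ : ∃ m, k = ℓP + m := ⟨k - ℓP, by omega⟩
      rw [hv2 m]
      have hq1 := hQq m (by omega)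
      have hminq : -p ≤ min 0 q := le_min (by linarith) (by linarith)
      linarith
  have H2 : ∀ j k, j ≤ k → k ≤ ℓP + ℓQ → -B ≤ vGain h k - vGain h j := by
    intro j k hjk hk
    rcases le_or_gt k ℓP with hkP | hkP
    · rw [hv1 k hkP, hv1 j (le_trans hjk hkP)]
      exact traversable_bound B hB gP ℓP hPtrav j k hjk hkP
    rcases le_or_gt ℓP j with hjP | hjP
    · obtain ⟨mj, rfl⟩ : ∃ m, j = ℓP + m := ⟨j - ℓP, by omega⟩
      obtain ⟨mk, rfl⟩ : ∃ m, k = ℓP + m := ⟨k - ℓP, by omega⟩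
      rw [hv2 mj, hv2 mk]
      have := traversable_bound B hB gQ ℓQ hQtrav mj mk (by omega) (by omega)
      linarith
    · obtain ⟨mk, rfl⟩ : ∃ m, k = ℓP + m := ⟨k - ℓP, by omega⟩
      rw [hv1 j (by omega), hv2 mk]
      have h1 := hPtop j (by omega)
      have h2 := traversable_bound B hB gQ ℓQ hQtrav 0 mk (by omega) (by omega)
      rw [vGain_zero] at h2
      linarith
  obtain ⟨hfeas, hch⟩ := feasible_of_bounds B hB h (ℓP + ℓQ) H1 H2
  refine ⟨w, ℓP + ℓQ, ⟨?_, ?_, ?_⟩, ?_⟩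
  · rw [hwP 0 (by omega)]; exact hWP.1
  · rw [hwQ (ℓP + ℓQ) (by omega)]
    have : ℓP + ℓQ - ℓP = ℓQ := by omega
    rw [this]; exact hWQ.2.1
  · intro t ht
    rcases le_or_gt ℓP t with hc | hc
    · rw [hwQ t hc, hwQ (t + 1) (by omega)]
      have : t + 1 - ℓP = t - ℓP + 1 := by omega
      rw [this]
      exact hWQ.2.2 (t - ℓP) (by omega)
    · rw [hwP t (by omega), hwP (t + 1) (by omega)]
      exact hWP.2.2 t hc
  · rw [alpha, if_pos hfeas]
    exact_mod_cast hch

end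

end EV
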